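/- arXiv:2002.06705 — 3 statements merged into one kernel-verified Lean document; each statement's English description precedes it below -/
import Mathlib

section
/- Assuming the Continuum Hypothesis, there exists a sequence ⟨p_η : η < ω₁⟩ of functions p_η : η → ω such that for every η < ω₁, the set {p_β ↾ η : β > η} equals all of ω^η (the set of all functions from η to ω). -/
/-!
Let `S` be the set of pairs `⟨η, g⟩` with `η < ω₁` and `g : η → ω`. Every `η < ω₁` is
countable, so `|S| ≤ ω₁ · ℵ₀^ℵ₀ = ω₁ · 𝔠`, which is `ℵ₁` under CH. Since `ω₁ ≃ ω₁ × S`, there is a map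
`e : ω₁ → S` all of whose fibres have size `ℵ₁` and are therefore unbounded in `ω₁`. Taking for `p_β`
the function `g`, where `e β = ⟨η, g⟩`, padded with zeros above `η`, every `g : η → ω` is `p_β ↾ η`
for unboundedly many `β`.
-/

open Cardinal Set

universe u

theorem exists_unbounded_fibers {α S : Type u} [LinearOrder α] (hα : ℵ₀ ≤ #α)
    (hIio : ∀ η : α, #(Iio η) < #α) [Nonempty S] (hS : #S ≤ #α) :
    ∃ e : α → S, ∀ s η, ∃ β, η < β ∧ e β = s := by
  obtain ⟨j⟩ : Nonempty (α ≃ α × S) := by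
    rw [← Cardinal.eq, mk_prod, lift_id, lift_id, Cardinal.mul_eq_left hα hS (mk_ne_zero S)]
  refine ⟨fun β ↦ (j β).2, fun s η ↦ ?_⟩
  by_contra! hfiber
  have hbounded (a : α) : j.symm (a, s) ∈ Iic η :=
    not_lt.1 fun hlt ↦ hfiber _ hlt (by simp)
  have hle : #α ≤ #(Iic η) :=
    mk_le_of_injective (f := fun a ↦ ⟨j.symm (a, s), hbounded a⟩) fun a b hab ↦ by
      simpa using congrArg (fun x : Iic η ↦ (j x.1).1) hab
  have hlt : #(Iic η) < #α := by
    rw [← Iio_insert]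
    exact mk_insert_le.trans_lt (add_lt_of_lt hα (hIio η) (one_lt_aleph0.trans_le hα))
  exact hle.not_gt hlt

theorem mk_arrow_nat_le_continuum {β : Type*} (hβ : #β ≤ ℵ₀) : #(β → ℕ) ≤ 𝔠 := by
  rw [mk_arrow, mk_nat, lift_aleph0, ← aleph0_power_aleph0]
  exact power_le_power_left aleph0_ne_zero (lift_le_aleph0.2 hβ)

theorem continuum_eq_aleph_one_univ.{v, w} (h : (𝔠 : Cardinal.{v}) = ℵ₁) :
    (𝔠 : Cardinal.{w}) = ℵ₁ := by
  apply lift_injective.{v}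
  simpa using congrArg lift.{w} h

theorem mk_Iio_toType_aleph_one_le (η : (ℵ₁ : Cardinal.{u}).ord.ToType) : #(Iio η) ≤ ℵ₀ :=
  lt_aleph_one_iff.1 (by simpa using mk_Iio_lt η)

theorem mk_sigma_Iio_arrow_nat_le_aleph_one (hCH : (𝔠 : Cardinal.{u}) = ℵ₁) :
    #(Σ η : (ℵ₁ : Cardinal.{u}).ord.ToType, ({x // x < η} → ℕ)) ≤ ℵ₁ := by
  rw [mk_sigma]
  calc sum (fun η : (ℵ₁ : Cardinal.{u}).ord.ToType ↦ #({x // x < η} → ℕ))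
      ≤ sum (fun _ : (ℵ₁ : Cardinal.{u}).ord.ToType ↦ (ℵ₁ : Cardinal.{u})) :=
        sum_le_sum _ _ fun η ↦
          (mk_arrow_nat_le_continuum (mk_Iio_toType_aleph_one_le η)).trans hCH.le
    _ = ℵ₁ := by rw [sum_const', mk_toType, card_ord, mul_eq_self aleph0_lt_aleph_one.le]

def extendByZero {α M : Type*} [LT α] [DecidableLT α] [Zero M]
    (s : Σ η : α, ({x // x < η} → M)) (x : α) : M :=
  if h : x < s.1 then s.2 ⟨x, h⟩ else 0

theorem extendByZero_mk {α M : Type*} [LT α] [DecidableLT α] [Zero M] {η : α}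
    (g : {x // x < η} → M) (x : {x // x < η}) : extendByZero ⟨η, g⟩ x.1 = g x :=
  dif_pos x.2

/-- Under CH there is a sequence ⟨p_η : η < ω₁⟩, p_η : η → ω, such that for every η < ω₁
the set of restrictions {p_β ↾ η : β > η} is all of ω^η. -/
theorem sierpinski_sequence_of_CH
    (hCH : (2 : Cardinal) ^ Cardinal.aleph0 = Cardinal.aleph 1) :
    ∃ p : ∀ η : (Cardinal.aleph 1).ord.ToType, ({x // x < η} → ℕ),
      ∀ η : (Cardinal.aleph 1).ord.ToType, ∀ g : {x // x < η} → ℕ,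
        ∃ β, ∃ hβ : η < β, ∀ x : {x // x < η}, p β ⟨x.1, x.2.trans hβ⟩ = g x := by
  -- `hCH` and the conclusion live in independent universes.
  have hcont : (𝔠 : Cardinal) = ℵ₁ := continuum_eq_aleph_one_univ (two_power_aleph0 ▸ hCH)
  have hmk : #(ℵ₁ : Cardinal).ord.ToType = ℵ₁ := mk_ord_toType _
  have : Nonempty (ℵ₁ : Cardinal).ord.ToType := nonempty_ord_toType (aleph_pos 1).ne'
  have : Nonempty (Σ η : (ℵ₁ : Cardinal).ord.ToType, ({x // x < η} → ℕ)) :=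
    ⟨⟨Classical.arbitrary _, fun _ ↦ 0⟩⟩
  obtain ⟨e, he⟩ :=
    exists_unbounded_fibers (S := Σ η : (ℵ₁ : Cardinal).ord.ToType, ({x // x < η} → ℕ))
    (by rw [hmk]; exact aleph0_lt_aleph_one.le) (fun η ↦ by simpa using mk_Iio_lt η)
    (by rw [hmk]; exact mk_sigma_Iio_arrow_nat_le_aleph_one hcont)
  refine ⟨fun β x ↦ extendByZero (e β) x.1, fun η g ↦ ?_⟩
  obtain ⟨β, hηβ, hβ⟩ := he ⟨η, g⟩ η
  exact ⟨β, hηβ, fun x ↦ by simp only [hβ, extendByZero_mk]⟩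
end

section
/- Assume ♣(κ⁺) (stick at κ⁺): there is a sequence ⟨X_i : i < κ⁺⟩ with X_i ⊆ κ⁺, otp(X_i) = κ, such that every A ∈ [κ⁺]^{κ⁺} contains some X_i. Then for every sequence of partitions ⟨p_γ : γ < κ⁺⟩ with p_γ : [κ⁺]² → λ_γ and λ_γ < cf(κ), there exists a coloring f : [κ⁺]² → κ⁺ such that for every A, B ∈ [κ⁺]^{κ⁺} and every γ < κ⁺ there exist j < λ_γ and X ∈ [A]^κ such that f attains every color < κ⁺ on (X ⊛ B) ∩ p_γ⁻¹({j}). -/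
/-!
For each column `β < κ⁺` and each pair `i, γ < β`, the `λ_γ < cf κ` colour classes of
`p γ (·) β` cannot all meet the stick set `X i` in fewer than `κ` points, so one class `j(β, i, γ)`
meets it in `κ` points. At most `κ` requirements "realise colour `c < β` inside that class" concern
column `β`, so they can be met at pairwise distinct points `α`, and `f (·) β` is defined there.
Given `A`, `B` and `γ`, pick `X i ⊆ A`; it is bounded in `κ⁺` by regularity, and `κ⁺` many
`β ∈ B` above it share one value `j` of `j(β, i, γ)`, so arbitrarily large such `β` exist.
-/

open Cardinal Set Function
open scoped Ordinal

universe u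

namespace Cardinal

theorem exists_injective_forall_mem {ι T : Type u} {κ : Cardinal.{u}} (hι : #ι ≤ κ)
    (F : ι → Set T) (hF : ∀ i, κ ≤ #(F i)) :
    ∃ v : ι → T, Injective v ∧ ∀ i, v i ∈ F i := by
  obtain ⟨r⟩ : Nonempty (ι ↪ κ.ord.ToType) := by rwa [← mk_ord_toType κ, le_def] at hι
  have hwf : WellFounded (InvImage (· < ·) r) := InvImage.wf r wellFounded_lt
  -- the points chosen at earlier stages are fewer than `κ`, so they cannot exhaust `F i`
  have hfree : ∀ i (w : {a // r a < r i} → T), (F i \ range w).Nonempty := by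
    intro i w
    have hlt : #{a // r a < r i} < κ := by
      refine (mk_le_of_injective (f := fun a => (⟨r a.1, a.2⟩ : Iio (r i))) ?_).trans_lt ?_
      · exact fun a b hab => Subtype.ext (r.injective (congrArg Subtype.val hab))
      · exact (mk_Iio_lt (r i) (by simp)).trans_eq (mk_ord_toType κ)
    refine sdiff_nonempty.2 fun hsub => ?_
    exact ((mk_le_mk_of_subset hsub).trans mk_range_le).not_gt (hlt.trans_le (hF i))
  let v : ι → T := hwf.fix fun i ih => (hfree i fun a => ih a.1 a.2).some
  have hv : ∀ i, v i ∈ F i \ range (fun a : {a // r a < r i} => v a) := fun i => by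
    rw [show v i = _ from hwf.fix_eq _ i]
    exact Nonempty.some_mem _
  refine ⟨v, fun a b hab => ?_, fun i => (hv i).1⟩
  by_contra hne
  rcases (r.injective.ne hne).lt_or_gt with h | h
  · exact (hv b).2 ⟨⟨a, h⟩, hab⟩
  · exact (hv a).2 ⟨⟨b, h⟩, hab.symm⟩

theorem exists_forall_exists_mem_apply_eq {ι T : Type u} {C : Type*} [Nonempty C]
    {κ : Cardinal.{u}} (hι : #ι ≤ κ) (F : ι → Set T) (hF : ∀ i, κ ≤ #(F i)) (c : ι → C) :
    ∃ g : T → C, ∀ i, ∃ a ∈ F i, g a = c i := by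
  obtain ⟨v, hv, hvF⟩ := exists_injective_forall_mem hι F hF
  exact ⟨extend v c fun _ => Classical.arbitrary C,
    fun i => ⟨v i, hvF i, hv.extend_apply c _ i⟩⟩

theorem exists_coloring_forall_exists_mem_apply_eq {N : Type u} [LinearOrder N]
    {κ : Cardinal.{u}} (hκ : ℵ₀ ≤ κ) (hN : ∀ β : N, #(Iio β) ≤ κ)
    (F : N → N → N → Set N) (hF : ∀ β i γ, κ ≤ #(F β i γ)) :
    ∃ f : N → N → N, ∀ β i γ c, i < β → γ < β → c < β → ∃ α ∈ F β i γ, f α β = c := by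
  have hcol : ∀ β, ∃ g : N → N, ∀ t : Iio β × Iio β × Iio β,
      ∃ α ∈ F β t.1 t.2.1, g α = t.2.2 := fun β =>
    have : Nonempty N := ⟨β⟩
    exists_forall_exists_mem_apply_eq
      (by simpa [mul_eq_self hκ] using mul_le_mul' (hN β) (mul_le_mul' (hN β) (hN β)))
      (fun t : Iio β × Iio β × Iio β => F β t.1 t.2.1) (fun t => hF β t.1 t.2.1)
      (fun t => t.2.2.1)
  choose g hg using hcol
  exact ⟨fun α β => g β α, fun β i γ c hi hγ hc => hg β (⟨i, hi⟩, ⟨γ, hγ⟩, ⟨c, hc⟩)⟩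

theorem exists_forall_lt_of_mk_lt_cof {α : Type u} [LinearOrder α] {s : Set α}
    (hs : #s < Order.cof α) : ∃ x, ∀ y ∈ s, y < x :=
  not_isCofinal_iff.1 fun h => (Order.cof_le h).not_gt hs

theorem exists_mem_gt_of_mk_le {α : Type u} [LinearOrder α] [WellFoundedLT α]
    (h : (#α).ord = typeLT α) (hα : ℵ₀ ≤ #α) {s : Set α} (hs : #α ≤ #s) (c : α) :
    ∃ b ∈ s, c < b := by
  by_contra! hc
  exact (hs.trans (mk_le_mk_of_subset hc)).not_gt (mk_Iic_lt c h hα)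

end Cardinal

/-- From ♣(κ⁺) (a stick sequence ⟨X_i : i < κ⁺⟩ of subsets of κ⁺ of order type κ such
that every A ∈ [κ⁺]^{κ⁺} contains some X_i), for every sequence of partitions
⟨p_γ : γ < κ⁺⟩ with p_γ : [κ⁺]² → λ_γ, λ_γ < cf(κ), there is a coloring f : [κ⁺]² → κ⁺
such that for all A, B ∈ [κ⁺]^{κ⁺} and γ < κ⁺ there are j < λ_γ and X ∈ [A]^κ with f
attaining every color on (X ⊛ B) ∩ p_γ⁻¹{j}. Order type κ is expressed via a strictly
monotone enumeration e i : κ → κ⁺ of X i. -/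
theorem stick_strong_coloring_over_partitions (κ : Cardinal) (hκ : Cardinal.aleph0 ≤ κ)
    (X : (Order.succ κ).ord.ToType → Set (Order.succ κ).ord.ToType)
    (e : (Order.succ κ).ord.ToType → κ.ord.ToType → (Order.succ κ).ord.ToType)
    (he : ∀ i, StrictMono (e i) ∧ X i = Set.range (e i))
    (hstick : ∀ A : Set (Order.succ κ).ord.ToType,
      Cardinal.mk A = Order.succ κ → ∃ i, X i ⊆ A)
    (lam : (Order.succ κ).ord.ToType → Cardinal)
    (hlam : ∀ γ, lam γ < Ordinal.cof κ.ord)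
    (p : ∀ γ, (Order.succ κ).ord.ToType → (Order.succ κ).ord.ToType → (lam γ).ord.ToType) :
    ∃ f : (Order.succ κ).ord.ToType → (Order.succ κ).ord.ToType → (Order.succ κ).ord.ToType,
      ∀ A B : Set (Order.succ κ).ord.ToType,
        Cardinal.mk A = Order.succ κ → Cardinal.mk B = Order.succ κ →
        ∀ γ, ∃ j : (lam γ).ord.ToType, ∃ Y ⊆ A, Cardinal.mk Y = κ ∧
          ∀ c, ∃ α ∈ Y, ∃ β ∈ B, α < β ∧ p γ α β = j ∧ f α β = c := by
  have hreg : (Order.succ κ).IsRegular := isRegular_succ hκ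
  have hX : ∀ i, #(X i) = κ := fun i => by
    rw [(he i).2, mk_range_eq _ (he i).1.injective, mk_ord_toType]
  have hclass : ∀ β i γ, ∃ j, κ ≤ #{α | α ∈ X i ∧ p γ α β = j} := fun β i γ => by
    obtain ⟨j, t, hts, ht, htj⟩ := infinite_pigeonhole_set (fun α : X i => p γ α β) κ
      (hX i).ge hκ (by rw [mk_ord_toType]; exact hlam γ)
    exact ⟨j, ht.trans (mk_le_mk_of_subset fun α hα => ⟨hts hα, htj hα⟩)⟩
  choose jsel hjsel using hclass
  obtain ⟨f, hf⟩ := exists_coloring_forall_exists_mem_apply_eq hκ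
    (fun β => Order.lt_succ_iff.1 ((mk_Iio_lt β (by simp)).trans_eq (mk_ord_toType _)))
    (fun β i γ => {α | α ∈ X i ∧ p γ α β = jsel β i γ}) hjsel
  refine ⟨f, fun A B hA hB γ => ?_⟩
  obtain ⟨i, hiA⟩ := hstick A hA
  obtain ⟨s, hs⟩ := exists_forall_lt_of_mk_lt_cof (s := X i)
    (by rw [Ordinal.cof_toType, hreg.cof_ord, hX i]; exact Order.lt_succ κ)
  obtain ⟨j, C, hCB, hC, hCj⟩ := infinite_pigeonhole_set (fun β : B => jsel β i γ) (Order.succ κ)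
    hB.ge (hκ.trans (Order.le_succ κ)) (by
      rw [hreg.cof_ord, mk_ord_toType]
      exact (hlam γ).trans_le ((Ordinal.cof_ord_le κ).trans (Order.le_succ κ)))
  refine ⟨j, X i, hiA, hX i, fun c => ?_⟩
  obtain ⟨β, hβC, hβ⟩ := exists_mem_gt_of_mk_le (by simp)
    (by simpa using hκ.trans (Order.le_succ κ)) (by simpa using hC) (max (max s i) (max γ c))
  obtain ⟨⟨hsβ, hiβ⟩, hγβ, hcβ⟩ := by simpa only [max_lt_iff] using hβ
  obtain ⟨α, ⟨hαX, hαp⟩, hαc⟩ := hf β i γ c hiβ hγβ hcβ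
  exact ⟨α, hαX, β, hCB hβC, (hs α hαX).trans hsβ, hαp.trans (hCj hβC), hαc⟩
end

section
/- Suppose 2^κ = κ⁺ and the Erdős–Hajnal–Milner symbol holds: there is h : [κ⁺]² → (κ⁺)^κ such that for every B ∈ [κ⁺]^{κ⁺}, for all but fewer than κ ordinals α < κ⁺, h attains every value on {α} ⊛ B. Then for every sequence ⟨p_δ : δ < κ⁺⟩ of partitions p_δ : [κ⁺]² → κ, there is a single coloring f : [κ⁺]² → κ⁺ such that for every δ < κ⁺, every A ∈ [κ⁺]^κ, B ∈ [κ⁺]^{κ⁺}, and every ζ : κ → κ⁺, there is {α,β} ∈ A ⊛ B with f(α,β) = ζ(p_δ(α,β)). -/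
/-!
Since `2^κ = κ⁺`, the colours `(κ⁺)^κ` of the Erdős–Hajnal–Milner colouring `h` can be
re-coded as pairs `(δ, ζ)` with `δ < κ⁺` and `ζ : κ → κ⁺`. Put `f(α, β) := ζ(p_δ(α, β))`
where `(δ, ζ)` is the code of `h(α, β)`. Given `A` of size `κ` and `B` of size `κ⁺`, some
`α ∈ A` lies outside the fewer than `κ` exceptional ordinals of `B`; then `h(α, ·)` attains
the code of any prescribed `(δ, ζ)` on `B` above `α`.
-/

open Cardinal

universe u

section Bookkeeping

variable {X S Δ K M : Type*}

def codedColoring (h : X → X → S) (e : S ≃ Δ × (K → M)) (p : Δ → X → X → K) (α β : X) : M :=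
  (e (h α β)).2 (p (e (h α β)).1 α β)

theorem exists_codedColoring_eq [LT X] {h : X → X → S} (e : S ≃ Δ × (K → M))
    (p : Δ → X → X → K) {B : Set X} {α : X} (hα : ∀ s, ∃ β ∈ B, α < β ∧ h α β = s)
    (δ : Δ) (ζ : K → M) :
    ∃ β ∈ B, α < β ∧ codedColoring h e p α β = ζ (p δ α β) := by
  obtain ⟨β, hβB, hαβ, hβ⟩ := hα (e.symm (δ, ζ))
  exact ⟨β, hβB, hαβ, by simp [codedColoring, hβ]⟩

end Bookkeeping

theorem Cardinal.power_eq_of_two_power_eq {κ μ : Cardinal.{u}} (hκ : ℵ₀ ≤ κ) (h : 2 ^ κ = μ) :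
    μ ^ κ = μ := by
  rw [← h, ← power_mul, mul_eq_self hκ]

theorem nonempty_arrow_equiv_prod_arrow {K M : Type u} (hM : ℵ₀ ≤ #M) (h : #M ^ #K = #M) :
    Nonempty ((K → M) ≃ M × (K → M)) := by
  have hfun : #(K → M) = #M := by rw [← power_def, h]
  refine Cardinal.eq.mp ?_
  rw [mk_prod, lift_id, lift_id, hfun, mul_eq_self hM]

theorem exists_mem_notMem_of_mk_lt {α : Type u} {A E : Set α} (h : #E < #A) :
    ∃ a ∈ A, a ∉ E := by
  by_contra! hAE
  exact (mk_le_mk_of_subset hAE).not_gt h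

/-- Assume 2^κ = κ⁺ and the Erdős–Hajnal–Milner symbol: there is
h : [κ⁺]² → (κ⁺)^κ such that for every B ∈ [κ⁺]^{κ⁺} the set of α < κ⁺ for which h
fails to attain all values on {α} ⊛ B has size < κ. Then for every sequence
⟨p_δ : δ < κ⁺⟩ of κ-partitions of [κ⁺]² there is a single f : [κ⁺]² → κ⁺ strong on
(κ,κ⁺)-rectangles over every p_δ. -/
theorem ehm_over_partitions (κ : Cardinal) (hκ : Cardinal.aleph0 ≤ κ)
    (hGCH : (2 : Cardinal) ^ κ = Order.succ κ)
    (h : (Order.succ κ).ord.ToType → (Order.succ κ).ord.ToType →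
      (κ.ord.ToType → (Order.succ κ).ord.ToType))
    (hh : ∀ B : Set (Order.succ κ).ord.ToType, Cardinal.mk B = Order.succ κ →
      Cardinal.mk {α : (Order.succ κ).ord.ToType |
        ¬ ∀ s : κ.ord.ToType → (Order.succ κ).ord.ToType,
            ∃ β ∈ B, α < β ∧ h α β = s} < κ)
    (p : ∀ _ : (Order.succ κ).ord.ToType,
      (Order.succ κ).ord.ToType → (Order.succ κ).ord.ToType → κ.ord.ToType) :
    ∃ f : (Order.succ κ).ord.ToType → (Order.succ κ).ord.ToType → (Order.succ κ).ord.ToType,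
      ∀ δ, ∀ A B : Set (Order.succ κ).ord.ToType,
        Cardinal.mk A = κ → Cardinal.mk B = Order.succ κ →
        ∀ ζ : κ.ord.ToType → (Order.succ κ).ord.ToType,
          ∃ α ∈ A, ∃ β ∈ B, α < β ∧ f α β = ζ (p δ α β) := by
  obtain ⟨e⟩ := nonempty_arrow_equiv_prod_arrow (K := κ.ord.ToType)
    (M := (Order.succ κ).ord.ToType) (by simpa using hκ.trans (Order.le_succ κ))
    (by simpa using power_eq_of_two_power_eq hκ hGCH)
  refine ⟨codedColoring h e p, fun δ A B hA hB ζ => ?_⟩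
  obtain ⟨α, hαA, hα⟩ := exists_mem_notMem_of_mk_lt ((hh B hB).trans_eq hA.symm)
  obtain ⟨β, hβB, hαβ, hf⟩ := exists_codedColoring_eq e p (not_not.mp hα) δ ζ
  exact ⟨α, hαA, β, hβB, hαβ, hf⟩
end
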